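/- Let 𝓐=(A,δ^A,σ^A,τ^A) and 𝓑=(B,δ^B,σ^B,τ^B) be fuzzy automata over a complete residuated lattice 𝓛 and alphabet X that are UFB-equivalent, and suppose G is the greatest forward bisimulation on 𝓐 and H is the greatest forward bisimulation on 𝓑. Then there exists a uniform fuzzy relation φ between A and B that is a forward bisimulation with kernel E_A^φ = G and co-kernel E_B^φ = H; moreover, this φ is the greatest forward bisimulation between 𝓐 and 𝓑. -/
import Mathlib


universe u

/-- A complete residuated lattice: a complete lattice with a commutative monoid
structure whose unit is the top element, together with a residuum operation
forming an adjoint pair with the multiplication. -/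
class CompleteResiduatedLattice (L : Type*) extends CompleteLattice L, CommMonoid L where
  /-- the residuum operation `→` -/
  res : L → L → L
  /-- the adjunction property -/
  adjunction : ∀ x y z : L, x * y ≤ z ↔ x ≤ res y z
  /-- the multiplicative unit `1` is the greatest element -/
  one_eq_top : (1 : L) = ⊤

namespace FuzzyAutomataBisim

/-- A fuzzy automaton over `L` and alphabet `X`, with state set `A`. -/
structure FuzzyAutomaton (L : Type*) [CompleteResiduatedLattice L] (X A : Type*) where
  δ : A → X → A → L
  σ : A → L
  τ : A → L

variable {L X A B C : Type*} [CompleteResiduatedLattice L]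

/-- biresiduum `x ↔ y = (x → y) ⊓ (y → x)` -/
def bires (x y : L) : L :=
  CompleteResiduatedLattice.res x y ⊓ CompleteResiduatedLattice.res y x

/-- inverse of a fuzzy relation -/
def inv (φ : A → B → L) : B → A → L := fun b a => φ a b

/-- composition of fuzzy relations -/
def rcomp (φ : A → B → L) (ψ : B → C → L) : A → C → L := fun a c => ⨆ b, φ a b * ψ b c

/-- composition of a fuzzy set with a fuzzy relation -/
def scomp (f : A → L) (φ : A → B → L) : B → L := fun b => ⨆ a, f a * φ a b

/-- composition of a fuzzy relation with a fuzzy set -/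
def rscomp (φ : A → B → L) (g : B → L) : A → L := fun a => ⨆ b, φ a b * g b

/-- degree of overlapping of two fuzzy sets -/
def sdot (f g : A → L) : L := ⨆ a, f a * g a

/-- kernel `E_A^φ` of a fuzzy relation -/
def ker (φ : A → B → L) : A → A → L := fun a₁ a₂ => ⨅ b, bires (φ a₁ b) (φ a₂ b)

/-- co-kernel `E_B^φ` of a fuzzy relation -/
def coker (φ : A → B → L) : B → B → L := fun b₁ b₂ => ⨅ a, bires (φ a b₁) (φ a b₂)

/-- `φ` is an `L`-function -/
def IsLFun (φ : A → B → L) : Prop := ∀ a, ∃ b, φ a b = 1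

/-- `φ` is surjective, i.e. `φ⁻¹` is an `L`-function -/
def IsSurj (φ : A → B → L) : Prop := ∀ b, ∃ a, φ a b = 1

/-- `φ` is a partial fuzzy function: `φ ∘ φ⁻¹ ∘ φ ≤ φ` -/
def IsPFF (φ : A → B → L) : Prop := rcomp (rcomp φ (inv φ)) φ ≤ φ

/-- `φ` is a uniform fuzzy relation: a partial fuzzy function that is a
surjective `L`-function -/
def IsUniform (φ : A → B → L) : Prop := IsPFF φ ∧ IsLFun φ ∧ IsSurj φ

/-- the set of crisp descriptions of `φ` -/
def CR (φ : A → B → L) : Set (A → B) := {ψ | ∀ a, φ a (ψ a) = 1}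

/-- `ψ : A → B` is `F`-surjective -/
def SurjMod (F : B → B → L) (ψ : A → B) : Prop := ∀ b, ∃ a, F (ψ a) b = 1

/-- fuzzy equivalence relation -/
structure IsFuzzyEquiv (E : A → A → L) : Prop where
  refl : ∀ a, E a a = 1
  symm : ∀ a b, E a b = E b a
  trans : ∀ a b c, E a b * E b c ≤ E a c

/-- fuzzy equality -/
def IsFuzzyEquality (E : A → A → L) : Prop :=
  IsFuzzyEquiv E ∧ ∀ a b, E a b = 1 → a = b

/-- the factor set `A/E = {E_a : a ∈ A}` -/
abbrev FactorSet (E : A → A → L) := {f : A → L // ∃ a, E a = f}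

/-- the class `E_a` as an element of `A/E` -/
def toClass (E : A → A → L) (a : A) : FactorSet E := ⟨E a, a, rfl⟩

/-- a chosen representative of a class -/
noncomputable def rep {E : A → A → L} (c : FactorSet E) : A := c.2.choose

/-- the fuzzy relation `Ẽ` on `A/E` -/
noncomputable def tildeRel (E : A → A → L) : FactorSet E → FactorSet E → L :=
  fun c c' => E (rep c) (rep c')

open Classical in
/-- a chosen crisp description of `φ` -/
noncomputable def crispDesc [Nonempty B] (φ : A → B → L) : A → B :=
  fun a => if h : ∃ b, φ a b = 1 then h.choose else Classical.arbitrary B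

/-- the induced map `φ̃ : A/E_A^φ → B/E_B^φ`, `φ̃(E_a) = F_{ψ(a)}` -/
noncomputable def tilde [Nonempty B] (φ : A → B → L) :
    FactorSet (ker φ) → FactorSet (coker φ) :=
  fun c => toClass (coker φ) (crispDesc φ (rep c))

/-- the fuzzy transition relation `δ_x` -/
def FuzzyAutomaton.δx (M : FuzzyAutomaton L X A) (x : X) : A → A → L := fun a b => M.δ a x b

open Classical in
/-- transitions extended to words -/
noncomputable def deltaWord (M : FuzzyAutomaton L X A) : List X → A → A → L
  | [] => fun a b => if a = b then (1 : L) else ⊥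
  | x :: u => rcomp (M.δx x) (deltaWord M u)

/-- the fuzzy language recognized by `M` : `L(M)(u) = σ ∘ δ_u ∘ τ` -/
noncomputable def lang (M : FuzzyAutomaton L X A) (u : List X) : L :=
  sdot (scomp M.σ (deltaWord M u)) M.τ

/-- forward simulation -/
def IsForwardSim (MA : FuzzyAutomaton L X A) (MB : FuzzyAutomaton L X B)
    (φ : A → B → L) : Prop :=
  MA.σ ≤ scomp MB.σ (inv φ) ∧
  (∀ x, rcomp (inv φ) (MA.δx x) ≤ rcomp (MB.δx x) (inv φ)) ∧
  rscomp (inv φ) MA.τ ≤ MB.τ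

/-- backward simulation -/
def IsBackwardSim (MA : FuzzyAutomaton L X A) (MB : FuzzyAutomaton L X B)
    (φ : A → B → L) : Prop :=
  scomp MA.σ φ ≤ MB.σ ∧
  (∀ x, rcomp (MA.δx x) φ ≤ rcomp φ (MB.δx x)) ∧
  MA.τ ≤ rscomp φ MB.τ

/-- forward bisimulation -/
def IsForwardBisim (MA : FuzzyAutomaton L X A) (MB : FuzzyAutomaton L X B)
    (φ : A → B → L) : Prop :=
  IsForwardSim MA MB φ ∧ IsForwardSim MB MA (inv φ)

/-- backward bisimulation -/
def IsBackwardBisim (MA : FuzzyAutomaton L X A) (MB : FuzzyAutomaton L X B)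
    (φ : A → B → L) : Prop :=
  IsBackwardSim MA MB φ ∧ IsBackwardSim MB MA (inv φ)

/-- backward-forward bisimulation -/
def IsBFBisim (MA : FuzzyAutomaton L X A) (MB : FuzzyAutomaton L X B)
    (φ : A → B → L) : Prop :=
  IsBackwardSim MA MB φ ∧ IsForwardSim MB MA (inv φ)

/-- forward-backward bisimulation -/
def IsFBBisim (MA : FuzzyAutomaton L X A) (MB : FuzzyAutomaton L X B)
    (φ : A → B → L) : Prop :=
  IsForwardSim MA MB φ ∧ IsBackwardSim MB MA (inv φ)

/-- isomorphism of fuzzy automata -/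
def IsIso (MA : FuzzyAutomaton L X A) (MB : FuzzyAutomaton L X B) (h : A → B) : Prop :=
  Function.Bijective h ∧
  (∀ (a₁ : A) (x : X) (a₂ : A), MA.δ a₁ x a₂ = MB.δ (h a₁) x (h a₂)) ∧
  (∀ a, MA.σ a = MB.σ (h a)) ∧
  (∀ a, MA.τ a = MB.τ (h a))

/-- the factor fuzzy automaton `𝓐/E` -/
noncomputable def factorAut (M : FuzzyAutomaton L X A) (E : A → A → L) :
    FuzzyAutomaton L X (FactorSet E) where
  δ := fun c x c' => rcomp (rcomp E (M.δx x)) E (rep c) (rep c')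
  σ := fun c => scomp M.σ E (rep c)
  τ := fun c => rscomp E M.τ (rep c)

/-- the natural fuzzy relation `φ(a₁, E_{a₂}) = E(a₁,a₂)` between `A` and `A/E` -/
def natRel (E : A → A → L) : A → FactorSet E → L := fun a c => c.1 a

/-- the fuzzy relation `G/E` on `A/E` -/
noncomputable def quotRel (E G : A → A → L) : FactorSet E → FactorSet E → L :=
  fun c c' => G (rep c) (rep c')

/-- the fuzzy relation `φ(a₁, E_{a₂}) = G(a₁,a₂)` between `A` and `A/E` -/
noncomputable def quotNatRel (E G : A → A → L) : A → FactorSet E → L :=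
  fun a c => G a (rep c)

/-- UFB-equivalence of fuzzy automata -/
def UFBEquiv (MA : FuzzyAutomaton L X A) (MB : FuzzyAutomaton L X B) : Prop :=
  ∃ φ : A → B → L, IsUniform φ ∧ IsForwardBisim MA MB φ

section Aux

open CompleteResiduatedLattice

variable {L X A B C D : Type*} [CompleteResiduatedLattice L]

lemma le_res_iff {x y z : L} : x * y ≤ z ↔ x ≤ res y z := adjunction x y z

lemma le_one' (x : L) : x ≤ 1 := one_eq_top (L := L) ▸ le_top

lemma bot_mul' (x : L) : (⊥ : L) * x = ⊥ :=
  le_bot_iff.mp (le_res_iff.mpr bot_le)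

lemma mul_le_mul_right'' {x y : L} (h : x ≤ y) (z : L) : x * z ≤ y * z :=
  le_res_iff.mpr (h.trans (le_res_iff.mp le_rfl))

lemma mul_le_mul'' {x y z w : L} (h : x ≤ y) (h' : z ≤ w) : x * z ≤ y * w := by
  refine (mul_le_mul_right'' h z).trans ?_
  rw [mul_comm y z, mul_comm y w]
  exact mul_le_mul_right'' h' y

lemma iSup_mul' {ι : Sort*} (f : ι → L) (a : L) : (⨆ i, f i) * a = ⨆ i, f i * a := by
  refine le_antisymm ?_ (iSup_le fun i => mul_le_mul_right'' (le_iSup f i) a)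
  exact le_res_iff.mpr (iSup_le fun i => le_res_iff.mp (le_iSup (fun i => f i * a) i))

lemma mul_iSup' {ι : Sort*} (a : L) (f : ι → L) : (a * ⨆ i, f i) = ⨆ i, a * f i := by
  rw [mul_comm, iSup_mul']; simp [mul_comm]

lemma inv_inv (φ : A → B → L) : inv (inv φ) = φ := rfl

lemma inv_rcomp (φ : A → B → L) (ψ : B → C → L) :
    inv (rcomp φ ψ) = rcomp (inv ψ) (inv φ) := by
  funext c a
  simp only [inv, rcomp, mul_comm]

lemma rcomp_mono {φ φ' : A → B → L} {ψ ψ' : B → C → L} (h : φ ≤ φ') (h' : ψ ≤ ψ') :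
    rcomp φ ψ ≤ rcomp φ' ψ' := fun a c =>
  iSup_mono fun b => mul_le_mul'' (h a b) (h' b c)

lemma scomp_mono {f f' : A → L} {φ φ' : A → B → L} (h : f ≤ f') (h' : φ ≤ φ') :
    scomp f φ ≤ scomp f' φ' := fun b =>
  iSup_mono fun a => mul_le_mul'' (h a) (h' a b)

lemma rscomp_mono {φ φ' : A → B → L} {g g' : B → L} (h : φ ≤ φ') (h' : g ≤ g') :
    rscomp φ g ≤ rscomp φ' g' := fun a =>
  iSup_mono fun b => mul_le_mul'' (h a b) (h' b)

lemma rcomp_assoc (φ : A → B → L) (ψ : B → C → L) (χ : C → D → L) :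
    rcomp (rcomp φ ψ) χ = rcomp φ (rcomp ψ χ) := by
  funext a d
  simp only [rcomp, iSup_mul', mul_iSup', mul_assoc]
  exact iSup_comm

lemma scomp_assoc (f : A → L) (φ : A → B → L) (ψ : B → C → L) :
    scomp (scomp f φ) ψ = scomp f (rcomp φ ψ) := by
  funext c
  simp only [scomp, rcomp, iSup_mul', mul_iSup', mul_assoc]
  exact iSup_comm

lemma rscomp_assoc (φ : A → B → L) (ψ : B → C → L) (g : C → L) :
    rscomp (rcomp φ ψ) g = rscomp φ (rscomp ψ g) := by
  funext a
  simp only [rscomp, rcomp, iSup_mul', mul_iSup', mul_assoc]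
  exact iSup_comm

lemma sim_comp {MA : FuzzyAutomaton L X A} {MB : FuzzyAutomaton L X B}
    {MC : FuzzyAutomaton L X C} {φ : A → B → L} {ψ : B → C → L}
    (h1 : IsForwardSim MA MB φ) (h2 : IsForwardSim MB MC ψ) :
    IsForwardSim MA MC (rcomp φ ψ) := by
  obtain ⟨hσ1, hδ1, hτ1⟩ := h1
  obtain ⟨hσ2, hδ2, hτ2⟩ := h2
  refine ⟨?_, ?_, ?_⟩
  · rw [inv_rcomp, ← scomp_assoc]
    exact hσ1.trans (scomp_mono hσ2 le_rfl)
  · intro x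
    rw [inv_rcomp, rcomp_assoc]
    calc rcomp (inv ψ) (rcomp (inv φ) (MA.δx x))
        ≤ rcomp (inv ψ) (rcomp (MB.δx x) (inv φ)) := rcomp_mono le_rfl (hδ1 x)
      _ = rcomp (rcomp (inv ψ) (MB.δx x)) (inv φ) := (rcomp_assoc _ _ _).symm
      _ ≤ rcomp (rcomp (MC.δx x) (inv ψ)) (inv φ) := rcomp_mono (hδ2 x) le_rfl
      _ = rcomp (MC.δx x) (rcomp (inv ψ) (inv φ)) := rcomp_assoc _ _ _
  · rw [inv_rcomp, rscomp_assoc]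
    exact (rscomp_mono le_rfl hτ1).trans hτ2

lemma bisim_inv {MA : FuzzyAutomaton L X A} {MB : FuzzyAutomaton L X B}
    {φ : A → B → L} (h : IsForwardBisim MA MB φ) : IsForwardBisim MB MA (inv φ) :=
  ⟨h.2, h.1⟩

lemma bisim_comp {MA : FuzzyAutomaton L X A} {MB : FuzzyAutomaton L X B}
    {MC : FuzzyAutomaton L X C} {φ : A → B → L} {ψ : B → C → L}
    (h1 : IsForwardBisim MA MB φ) (h2 : IsForwardBisim MB MC ψ) :
    IsForwardBisim MA MC (rcomp φ ψ) := by
  refine ⟨sim_comp h1.1 h2.1, ?_⟩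
  rw [inv_rcomp]
  exact sim_comp h2.2 h1.2

open Classical in
/-- the crisp identity relation -/
noncomputable def diag (A : Type*) : A → A → L := fun a b => if a = b then 1 else ⊥

lemma diag_bisim (MA : FuzzyAutomaton L X A) : IsForwardBisim MA MA (diag (L := L) A) := by
  have hinv : inv (diag (L := L) A) = diag A := by
    funext a b
    simp only [inv, diag]
    by_cases h : a = b
    · rw [if_pos h.symm, if_pos h]
    · rw [if_neg (fun h' : b = a => h h'.symm), if_neg h]
  have hsim : IsForwardSim MA MA (diag (L := L) A) := by
    refine ⟨?_, ?_, ?_⟩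
    · intro a
      simp only [scomp]
      refine le_iSup_of_le a ?_
      simp [inv, diag]
    · intro x a c
      simp only [rcomp]
      refine iSup_le fun b => ?_
      by_cases h : b = a
      · subst h
        refine le_iSup_of_le c ?_
        simp [inv, diag]
      · have hbot : inv (diag (L := L) A) a b = ⊥ := by simp [inv, diag, h]
        rw [hbot, bot_mul']
        exact bot_le
    · intro a
      simp only [rscomp]
      refine iSup_le fun b => ?_
      by_cases h : b = a
      · subst h
        simp [inv, diag]
      · have hbot : inv (diag (L := L) A) a b = ⊥ := by simp [inv, diag, h]
        rw [hbot, bot_mul']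
        exact bot_le
  exact ⟨hsim, by rw [hinv]; exact hsim⟩

lemma ker_le_rcomp_inv {φ : A → B → L} (hL : IsLFun φ) :
    ker φ ≤ rcomp φ (inv φ) := by
  intro a₁ a₂
  obtain ⟨b, hb⟩ := hL a₂
  have h1 : ker φ a₁ a₂ ≤ res (φ a₂ b) (φ a₁ b) :=
    (iInf_le _ b).trans inf_le_right
  refine le_trans ?_ (le_iSup (fun b' => φ a₁ b' * (inv φ) b' a₂) b)
  have : ker φ a₁ a₂ * φ a₂ b ≤ φ a₁ b := le_res_iff.mpr h1
  rw [hb, mul_one] at this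
  calc ker φ a₁ a₂ ≤ φ a₁ b := this
    _ = φ a₁ b * φ a₂ b := by rw [hb, mul_one]
    _ = φ a₁ b * (inv φ) b a₂ := rfl

lemma le_ker_of_rcomp_le {E : A → A → L} {φ : A → B → L}
    (hsym : ∀ a b, E a b = E b a) (h : rcomp E φ ≤ φ) : E ≤ ker φ := by
  intro a₁ a₂
  refine le_iInf fun b => le_inf ?_ ?_
  · refine le_res_iff.mp ?_
    calc E a₁ a₂ * φ a₁ b = E a₂ a₁ * φ a₁ b := by rw [hsym]
      _ ≤ rcomp E φ a₂ b := le_iSup (fun a => E a₂ a * φ a b) a₁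
      _ ≤ φ a₂ b := h a₂ b
  · refine le_res_iff.mp ?_
    calc E a₁ a₂ * φ a₂ b ≤ rcomp E φ a₁ b := le_iSup (fun a => E a₁ a * φ a b) a₂
      _ ≤ φ a₁ b := h a₁ b

end Aux

/-- UFB-equivalent automata admit a uniform forward bisimulation
whose kernel and co-kernel are the greatest forward bisimulations -/
theorem ufbEquiv_greatest {L X A B : Type*} [CompleteResiduatedLattice L]
    [Nonempty A] [Nonempty B]
    (MA : FuzzyAutomaton L X A) (MB : FuzzyAutomaton L X B)
    (G : A → A → L) (H : B → B → L)
    (hUFB : UFBEquiv MA MB)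
    (hG : IsForwardBisim MA MA G ∧ ∀ R : A → A → L, IsForwardBisim MA MA R → R ≤ G)
    (hH : IsForwardBisim MB MB H ∧ ∀ R : B → B → L, IsForwardBisim MB MB R → R ≤ H) :
    ∃ φ : A → B → L, IsUniform φ ∧ IsForwardBisim MA MB φ ∧
      ker φ = G ∧ coker φ = H ∧
      ∀ χ : A → B → L, IsForwardBisim MA MB χ → χ ≤ φ := by
  obtain ⟨θ, ⟨hPFF, hLF, hSurj⟩, hθ⟩ := hUFB
  obtain ⟨hGb, hGmax⟩ := hG
  obtain ⟨hHb, hHmax⟩ := hH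
  have hdiagA := hGmax _ (diag_bisim MA)
  have hdiagB := hHmax _ (diag_bisim MB)
  have hGrefl : ∀ a, (1 : L) ≤ G a a := fun a => by
    have := hdiagA a a; simpa [diag] using this
  have hHrefl : ∀ b, (1 : L) ≤ H b b := fun b => by
    have := hdiagB b b; simpa [diag] using this
  have hGsymm : ∀ a b, G a b = G b a := by
    have h1 : inv G ≤ G := hGmax _ (bisim_inv hGb)
    exact fun a b => le_antisymm (h1 b a) (h1 a b)
  have hHsymm : ∀ a b, H a b = H b a := by
    have h1 : inv H ≤ H := hHmax _ (bisim_inv hHb)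
    exact fun a b => le_antisymm (h1 b a) (h1 a b)
  have hGtrans : rcomp G G ≤ G := hGmax _ (bisim_comp hGb hGb)
  have hHtrans : rcomp H H ≤ H := hHmax _ (bisim_comp hHb hHb)
  set φ : A → B → L := rcomp G (rcomp θ H) with hφdef
  have hφbisim : IsForwardBisim MA MB φ := bisim_comp hGb (bisim_comp hθ hHb)
  have hGφ : rcomp G φ ≤ φ := by
    rw [hφdef, ← rcomp_assoc]
    exact rcomp_mono hGtrans le_rfl
  have hφH : rcomp φ H ≤ φ := by
    rw [hφdef, rcomp_assoc, rcomp_assoc]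
    exact rcomp_mono le_rfl (rcomp_mono le_rfl hHtrans)
  have hHinvφ : rcomp H (inv φ) ≤ inv φ := by
    intro b a
    have heq : rcomp H (inv φ) b a = rcomp φ H a b := by
      simp only [rcomp, inv]
      exact iSup_congr fun b' => by rw [hHsymm b b', mul_comm]
    rw [heq]
    exact hφH a b
  have hstep : ∀ a a₀ b, G a a₀ * (θ a₀ b * H b b) ≤ φ a b := fun a a₀ b =>
    (mul_le_mul'' le_rfl (le_iSup (fun b' => θ a₀ b' * H b' b) b)).trans
      (le_iSup (fun a' => G a a' * rcomp θ H a' b) a₀)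
  have hone : ∀ a b, θ a b = 1 → φ a b = 1 := by
    intro a b hb
    refine le_antisymm (le_one' _) ?_
    calc (1 : L) = 1 * (1 * 1) := by rw [mul_one, mul_one]
      _ ≤ G a a * (θ a b * H b b) :=
        mul_le_mul'' (hGrefl a) (mul_le_mul'' hb.ge (hHrefl b))
      _ ≤ φ a b := hstep a a b
  have hφLF : IsLFun φ := fun a => by
    obtain ⟨b, hb⟩ := hLF a
    exact ⟨b, hone a b hb⟩
  have hφSurj : IsSurj φ := fun b => by
    obtain ⟨a, ha⟩ := hSurj b
    exact ⟨a, hone a b ha⟩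
  have hgreatest : ∀ χ : A → B → L, IsForwardBisim MA MB χ → χ ≤ φ := by
    intro χ hχ
    have h1 : rcomp χ (inv θ) ≤ G := hGmax _ (bisim_comp hχ (bisim_inv hθ))
    intro a b
    obtain ⟨a₀, ha₀⟩ := hSurj b
    have hχG : χ a b ≤ G a a₀ := by
      have h2 : χ a b * θ a₀ b ≤ rcomp χ (inv θ) a a₀ :=
        le_iSup (fun b' => χ a b' * inv θ b' a₀) b
      rw [ha₀, mul_one] at h2
      exact h2.trans (h1 a a₀)
    calc χ a b = χ a b * (1 * 1) := by rw [mul_one, mul_one]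
      _ ≤ G a a₀ * (θ a₀ b * H b b) :=
        mul_le_mul'' hχG (mul_le_mul'' ha₀.ge (hHrefl b))
      _ ≤ φ a b := hstep a a₀ b
  have hφφG : rcomp φ (inv φ) ≤ G := hGmax _ (bisim_comp hφbisim (bisim_inv hφbisim))
  have hφφH : rcomp (inv φ) φ ≤ H := hHmax _ (bisim_comp (bisim_inv hφbisim) hφbisim)
  have hPFF' : IsPFF φ := (rcomp_mono hφφG (le_refl φ)).trans hGφ
  have hker : ker φ = G :=
    le_antisymm ((ker_le_rcomp_inv hφLF).trans hφφG)
      (le_ker_of_rcomp_le hGsymm hGφ)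
  have hcoker : coker φ = H := by
    have h1 : ker (inv φ) ≤ H := (ker_le_rcomp_inv (φ := inv φ) hφSurj).trans hφφH
    have h2 : H ≤ ker (inv φ) := le_ker_of_rcomp_le hHsymm hHinvφ
    exact le_antisymm h1 h2
  exact ⟨φ, ⟨hPFF', hφLF, hφSurj⟩, hφbisim, hker, hcoker, hgreatest⟩

end FuzzyAutomataBisim
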